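/- arXiv:1410.7085 — 3 statements merged into one kernel-verified Lean document; each statement's English description precedes it below -/
import Mathlib

section
/- Let P, R be positive integers, M an integer, and suppose h: R → C is continuous, 1/P-periodic, and satisfies h(x)^R = e^{2πiMx} for all real x. Then RP divides M. -/
open Complex Polynomial
open scoped Real

/-!
Dividing `h` by the continuous `R`-th root `exp (2πiMx/R)` of the character gives a continuous
function with values among the finitely many `R`-th roots of unity, hence a constant. So `h` is a
nonzero multiple of `exp (2πiMx/R)`, and `1/P`-periodicity forces `exp (2πiM/(RP)) = 1`.
-/

theorem PreconnectedSpace.apply_eq_of_pow_eq_one {X K : Type*} [TopologicalSpace X]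
    [PreconnectedSpace X] [CommRing K] [IsDomain K] [TopologicalSpace K] [T1Space K]
    {n : ℕ} (hn : 0 < n) {f : X → K} (hf : Continuous f) (hpow : ∀ x, f x ^ n = 1)
    (x y : X) : f x = f y :=
  isPreconnected_univ.constant_of_mapsTo (nthRootsFinset n (1 : K)).finite_toSet.isDiscrete
    hf.continuousOn (fun z _ => (mem_nthRootsFinset hn 1).2 (hpow z)) trivial trivial

theorem Complex.eq_mul_exp_div_of_pow_eq_exp {R : ℕ} (hR : 0 < R) {c : ℂ} {h : ℝ → ℂ}
    (hcont : Continuous h) (hpow : ∀ x : ℝ, h x ^ R = exp (c * x)) (x : ℝ) :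
    h x = h 0 * exp (c * x / R) := by
  have hexp_pow (y : ℝ) : exp (c * y / R) ^ R = exp (c * y) := by
    rw [← exp_nat_mul, mul_div_cancel₀ _ (Nat.cast_ne_zero.2 hR.ne')]
  have hroot (y : ℝ) : (h y / exp (c * y / R)) ^ R = 1 := by
    rw [div_pow, hpow, hexp_pow, div_self (exp_ne_zero _)]
  have hconst := PreconnectedSpace.apply_eq_of_pow_eq_one hR
    (hcont.div (by fun_prop) fun y => exp_ne_zero _) hroot x 0
  simpa [div_eq_iff (exp_ne_zero _)] using hconst

theorem Complex.exp_two_pi_I_mul_div_eq_one_iff (M : ℤ) {N : ℕ} (hN : N ≠ 0) :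
    exp (2 * π * I * M / N) = 1 ↔ (N : ℤ) ∣ M := by
  rw [← (isPrimitiveRoot_exp N hN).zpow_eq_one_iff_dvd, ← exp_int_mul]
  ring_nf

/-- If `h : ℝ → ℂ` is continuous, `1/P`-periodic, and `h(x)^R = e^{2πiMx}` for all
`x`, then `RP` divides `M`. -/
theorem periodic_root_of_character (P R : ℕ) (hP : 0 < P) (hR : 0 < R) (M : ℤ)
    (h : ℝ → ℂ) (hcont : Continuous h)
    (hper : ∀ x : ℝ, h (x + 1 / P) = h x)
    (hpow : ∀ x : ℝ, h x ^ R = Complex.exp (2 * Real.pi * Complex.I * M * x)) :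
    ((R : ℤ) * P) ∣ M := by
  have h0 : h 0 ≠ 0 := fun h0 => by simpa [h0, hR.ne'] using hpow 0
  have hchar := eq_mul_exp_div_of_pow_eq_exp hR hcont hpow
  have hperiod : exp (2 * π * I * M * ((1 / P : ℝ) : ℂ) / R) = 1 := by
    have := hper 0
    rwa [zero_add, hchar, hchar 0, ofReal_zero, mul_zero, zero_div, exp_zero, mul_one,
      mul_eq_left₀ h0] at this
  have hRP : R * P ≠ 0 := (Nat.mul_pos hR hP).ne'
  rw [← Nat.cast_mul, ← exp_two_pi_I_mul_div_eq_one_iff M hRP]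
  convert hperiod using 2
  push_cast
  field_simp
end

section
/- Let P1, P2, R be positive integers, M1, M2 integers, and u, η real numbers. Suppose h: R × R → C is continuous, 1/P1-periodic in the first variable, 1/P2-periodic in the second variable, and satisfies Π_{r=0}^{R−1} h(x + r u, ω + r η) = e^{2πi(M1 x + M2 ω)} for all (x, ω) ∈ R × R. Then R·P1 divides M1 and R·P2 divides M2. -/
/-!
The product identity forces `h` to be nowhere zero, so on the simply connected plane it has a
continuous logarithm `g`. For a period `v` of `h`, the difference `g (p + v) - g p` is continuous
with values in `2πiℤ`, hence equal to a constant `2πik`. Taking logarithms in the product identity,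
`∑ r < R, g (p + r • w) - 2πi ℓ p` is likewise constant, and comparing it at `p` and `p + v` gives
`ℓ (p + v) - ℓ p = R k`. With `ℓ (x, ω) = M₁ x + M₂ ω` and `v = (1/P₁, 0)` this says
`M₁ / P₁ = R k`; the period `(0, 1/P₂)` gives the same for `M₂`.
-/

open Complex Finset

section ContinuousLog

variable {A : Type*} [TopologicalSpace A]

theorem exists_continuous_cexp_eq [SimplyConnectedSpace A] [LocallyPathConnectedSpace A]
    {f : A → ℂ} (hf : Continuous f) (hf₀ : ∀ a, f a ≠ 0) :
    ∃ g : A → ℂ, Continuous g ∧ ∀ a, cexp (g a) = f a := by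
  obtain ⟨a₀⟩ : Nonempty A := inferInstance
  obtain ⟨g, ⟨-, hg⟩, -⟩ := isCoveringMapOn_exp.existsUnique_continuousMap_lifts ⟨f, hf⟩
    (e₀ := log (f a₀)) (exp_log (hf₀ a₀)) hf₀
  exact ⟨g, g.continuous, congrFun hg⟩

theorem exists_int_eq_add_of_cexp_eq [ConnectedSpace A] {g₁ g₂ : A → ℂ}
    (hg₁ : Continuous g₁) (hg₂ : Continuous g₂) (h : ∀ a, cexp (g₁ a) = cexp (g₂ a)) :
    ∃ k : ℤ, ∀ a, g₁ a = g₂ a + k * (2 * Real.pi * I) := by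
  have hmem : ∀ a, g₁ a - g₂ a ∈ AddSubgroup.zmultiples (2 * Real.pi * I) := fun a => by
    obtain ⟨k, hk⟩ := exp_eq_exp_iff_exists_int.mp (h a)
    exact ⟨k, by simp [hk]⟩
  have := NormedSpace.discreteTopology_zmultiples (2 * Real.pi * I)
  obtain ⟨a₀⟩ : Nonempty A := inferInstance
  obtain ⟨k, hk⟩ := hmem a₀
  refine ⟨k, fun a => ?_⟩
  have hconst : g₁ a - g₂ a = g₁ a₀ - g₂ a₀ :=
    isPreconnected_univ.constant_of_mapsTo DiscreteTopology.isDiscrete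
      (hg₁.sub hg₂).continuousOn (fun a _ => hmem a) trivial trivial
  simp only [zsmul_eq_mul] at hk
  linear_combination hconst - hk

end ContinuousLog

theorem exists_int_sub_eq_mul_of_prod_eq_cexp {A : Type*} [TopologicalSpace A]
    [AddCommMonoid A] [ContinuousAdd A] [SimplyConnectedSpace A] [LocallyPathConnectedSpace A]
    {f : A → ℂ} (hf : Continuous f) {ℓ : A → ℝ} (hℓ : Continuous ℓ) {R : ℕ} (hR : 0 < R)
    {v w : A} (hper : ∀ p, f (p + v) = f p)
    (hprod : ∀ p, ∏ r ∈ range R, f (p + r • w) = cexp (2 * Real.pi * I * ℓ p)) :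
    ∃ k : ℤ, ∀ p, ℓ (p + v) - ℓ p = R * k := by
  have hf₀ : ∀ p, f p ≠ 0 := fun p => by
    have := prod_ne_zero_iff.mp (hprod p ▸ exp_ne_zero _) 0 (mem_range.2 hR)
    rwa [zero_nsmul, add_zero] at this
  obtain ⟨g, hg, hgf⟩ := exists_continuous_cexp_eq hf hf₀
  obtain ⟨k, hk⟩ := exists_int_eq_add_of_cexp_eq (g₁ := fun p => g (p + v))
    (hg.comp (continuous_add_const v)) hg (fun p => by simp only [hgf, hper])
  obtain ⟨m, hm⟩ := exists_int_eq_add_of_cexp_eq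
    (g₁ := fun p => ∑ r ∈ range R, g (p + r • w)) (g₂ := fun p => 2 * Real.pi * I * ℓ p)
    (continuous_finsetSum _ fun r _ => hg.comp (continuous_add_const _)) (by fun_prop)
    (fun p => by simp only [exp_sum, hgf, hprod])
  refine ⟨k, fun p => ?_⟩
  have hshift : ∑ r ∈ range R, g (p + v + r • w)
      = ∑ r ∈ range R, g (p + r • w) + R * (k * (2 * Real.pi * I)) := by
    simp only [add_right_comm p v, hk, sum_add_distrib, sum_const, card_range, nsmul_eq_mul]
  have hcompare := (hm (p + v)).symm.trans (hshift.trans (by rw [hm p]))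
  have : ((ℓ (p + v) - ℓ p : ℝ) : ℂ) = ((R * k : ℝ) : ℂ) :=
    mul_left_cancel₀ two_pi_I_ne_zero (by push_cast; linear_combination hcompare)
  exact_mod_cast this

theorem Int.mul_dvd_of_cast_div_eq {M k : ℤ} {P R : ℕ} (hP : P ≠ 0)
    (h : (M / P : ℝ) = R * k) : (R * P : ℤ) ∣ M :=
  ⟨k, by
    rw [div_eq_iff (Nat.cast_ne_zero.2 hP)] at h
    exact_mod_cast (show (M : ℝ) = R * P * k by linear_combination h)⟩

/-- Proposition 3.2: if `h : ℝ × ℝ → ℂ` is continuous, `1/P₁`-periodic in the first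
variable, `1/P₂`-periodic in the second, and
`Π_{r=0}^{R-1} h(x + ru, ω + rη) = e^{2πi(M₁x + M₂ω)}` for all `(x,ω)`, then
`RP₁ ∣ M₁` and `RP₂ ∣ M₂`. -/
theorem key_proposition (P₁ P₂ R : ℕ) (hP₁ : 0 < P₁) (hP₂ : 0 < P₂) (hR : 0 < R)
    (M₁ M₂ : ℤ) (u η : ℝ) (h : ℝ → ℝ → ℂ)
    (hcont : Continuous fun p : ℝ × ℝ => h p.1 p.2)
    (hper₁ : ∀ x ω : ℝ, h (x + 1 / P₁) ω = h x ω)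
    (hper₂ : ∀ x ω : ℝ, h x (ω + 1 / P₂) = h x ω)
    (hprod : ∀ x ω : ℝ, ∏ r ∈ Finset.range R, h (x + r * u) (ω + r * η)
      = Complex.exp (2 * Real.pi * Complex.I * (M₁ * x + M₂ * ω))) :
    ((R : ℤ) * P₁) ∣ M₁ ∧ ((R : ℤ) * P₂) ∣ M₂ := by
  have hprod' : ∀ p : ℝ × ℝ, ∏ r ∈ range R, h (p + r • (u, η)).1 (p + r • (u, η)).2 =
      cexp (2 * Real.pi * I * ((M₁ * p.1 + M₂ * p.2 : ℝ))) := fun p => by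
    simpa using hprod p.1 p.2
  obtain ⟨k₁, hk₁⟩ := exists_int_sub_eq_mul_of_prod_eq_cexp hcont (by fun_prop) hR
    (v := ((1 / P₁ : ℝ), 0)) (fun p => by simpa using hper₁ p.1 p.2) hprod'
  obtain ⟨k₂, hk₂⟩ := exists_int_sub_eq_mul_of_prod_eq_cexp hcont (by fun_prop) hR
    (v := (0, (1 / P₂ : ℝ))) (fun p => by simpa using hper₂ p.1 p.2) hprod'
  have h₁ := hk₁ 0
  have h₂ := hk₂ 0
  simp only [zero_add, Prod.fst_zero, Prod.snd_zero, add_zero, mul_zero, mul_one_div,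
    sub_zero] at h₁ h₂
  exact ⟨Int.mul_dvd_of_cast_div_eq hP₁.ne' h₁, Int.mul_dvd_of_cast_div_eq hP₂.ne' h₂⟩
end

section
/- Any nonzero continuous quasiperiodic function F on R × R (i.e., satisfying F(x+1,ω) = e^{2πiω}F(x,ω) and F(x,ω+1) = F(x,ω)) must vanish somewhere: there exists (x0, ω0) with F(x0, ω0) = 0. -/
/-!
If `F` had no zero, its phase `F / ‖F‖` would be a continuous map from the simply connected
plane to the circle, so it would lift through `Circle.exp` to a continuous real argument `θ`.
Quasiperiodicity makes `θ (x + 1, ω) - θ (x, ω) - 2πω` and `θ (x, ω + 1) - θ (x, ω)` continuous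
with values in `2πℤ`, hence constant. Computing `θ (1, 1) - θ (0, 0)` along the two boundary
paths of the unit square then gives two values that differ by `2π`.
-/

open Complex

section

variable {A : Type*} [TopologicalSpace A]

noncomputable def circlePhase (f : C(A, ℂ)) (hf : ∀ a, f a ≠ 0) : C(A, Circle) where
  toFun a := ⟨f a / ‖f a‖, mem_sphere_zero_iff_norm.2 <| by
    rw [norm_div, norm_real, norm_norm, div_self (norm_ne_zero_iff.2 (hf a))]⟩
  continuous_toFun := Continuous.subtype_mk
    ((map_continuous f).div (by fun_prop) fun a => by simpa using hf a) _

@[simp]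
lemma coe_circlePhase (f : C(A, ℂ)) (hf : ∀ a, f a ≠ 0) (a : A) :
    (circlePhase f hf a : ℂ) = f a / ‖f a‖ :=
  rfl

lemma exists_circleExp_lift [SimplyConnectedSpace A] [LocallyPathConnectedSpace A]
    (u : C(A, Circle)) : ∃ θ : C(A, ℝ), ∀ a, Circle.exp (θ a) = u a := by
  obtain ⟨a₀⟩ := (inferInstance : Nonempty A)
  obtain ⟨t₀, ht₀⟩ := Circle.exp_surjective (u a₀)
  obtain ⟨θ, ⟨-, hθ⟩, -⟩ :=
    Circle.isCoveringMap_exp.existsUnique_continuousMap_lifts u a₀ t₀ ht₀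
  exact ⟨θ, congrFun hθ⟩

lemma eq_of_circleExp_eq_one [PreconnectedSpace A] {g : A → ℝ} (hg : Continuous g)
    (h : ∀ a, Circle.exp (g a) = 1) (a b : A) : g a = g b := by
  refine isPreconnected_univ.constant_of_mapsTo
    (T := (AddSubgroup.zmultiples (2 * Real.pi) : Set ℝ))
    (SetLike.isDiscrete_iff_discreteTopology.2 inferInstance) hg.continuousOn
    (fun a _ => ?_) trivial trivial
  obtain ⟨n, hn⟩ := Circle.exp_eq_one.1 (h a)
  exact ⟨n, (zsmul_eq_mul _ _).trans hn.symm⟩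

end

theorem false_of_circle_quasiperiodic (u : C(ℝ × ℝ, Circle))
    (h₁ : ∀ x ω : ℝ, u (x + 1, ω) = Circle.exp (2 * Real.pi * ω) * u (x, ω))
    (h₂ : ∀ x ω : ℝ, u (x, ω + 1) = u (x, ω)) : False := by
  obtain ⟨θ, hθ⟩ := exists_circleExp_lift u
  have shift₁ := eq_of_circleExp_eq_one
    (g := fun p : ℝ × ℝ => θ (p.1 + 1, p.2) - θ p - 2 * Real.pi * p.2) (by fun_prop)
    (fun p => by simp [Circle.exp_sub, hθ, h₁, mul_div_cancel_right])
  have shift₂ := eq_of_circleExp_eq_one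
    (g := fun p : ℝ × ℝ => θ (p.1, p.2 + 1) - θ p) (by fun_prop)
    (fun p => by simp [Circle.exp_sub, hθ, h₂])
  have top_vs_bottom : θ (1, 1) - θ (0, 1) - 2 * Real.pi = θ (1, 0) - θ (0, 0) := by
    simpa using shift₁ (0, 1) (0, 0)
  have right_vs_left : θ (1, 1) - θ (1, 0) = θ (0, 1) - θ (0, 0) := by
    simpa using shift₂ (1, 0) (0, 0)
  linarith [Real.pi_pos]

theorem quasiperiodic_has_zero_general (F : ℝ → ℝ → ℂ)
    (hcont : Continuous fun p : ℝ × ℝ => F p.1 p.2)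
    (hq1 : ∀ x ω : ℝ, F (x + 1) ω = Complex.exp (2 * Real.pi * Complex.I * ω) * F x ω)
    (hq2 : ∀ x ω : ℝ, F x (ω + 1) = F x ω) :
    ∃ x₀ ω₀ : ℝ, F x₀ ω₀ = 0 := by
  by_contra! hF
  refine false_of_circle_quasiperiodic (circlePhase ⟨_, hcont⟩ fun p => hF p.1 p.2)
    (fun x ω => Circle.ext ?_) (fun x ω => Circle.ext ?_)
  · have hexp : Complex.exp (2 * Real.pi * Complex.I * ω) = Circle.exp (2 * Real.pi * ω) := by
      rw [Circle.coe_exp]; push_cast; ring_nf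
    have hnorm : ‖Complex.exp (2 * Real.pi * Complex.I * ω)‖ = 1 := hexp ▸ Circle.norm_coe _
    rw [coe_circlePhase, ContinuousMap.coe_mk, hq1, norm_mul, hnorm, one_mul, hexp, mul_div_assoc]
    rfl
  · simp [hq2]

/-- Any nonzero continuous quasiperiodic function on `ℝ × ℝ` must vanish somewhere. -/
theorem quasiperiodic_has_zero (F : ℝ → ℝ → ℂ)
    (hcont : Continuous fun p : ℝ × ℝ => F p.1 p.2)
    (hq1 : ∀ x ω : ℝ, F (x + 1) ω = Complex.exp (2 * Real.pi * Complex.I * ω) * F x ω)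
    (hq2 : ∀ x ω : ℝ, F x (ω + 1) = F x ω)
    (hne : ∃ x ω : ℝ, F x ω ≠ 0) :
    ∃ x₀ ω₀ : ℝ, F x₀ ω₀ = 0 :=
  quasiperiodic_has_zero_general F hcont hq1 hq2
end
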